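/- For 0 < α < 1 and m > 0, the function x ↦ −√(2m) K_{α−1}(√(2m)x)/K_α(√(2m)x) tends, as x → 0+, to be asymptotic to −(m^α Γ(1−α)/(2^{α−1} Γ(α))) x^{2α−1}, i.e., the ratio of the two sides converges to 1. -/

import Mathlib

/-! For `x > 0`, `I_ν x = (x/2)^ν S_ν((x/2)^2)` with `S_ν t = ∑ tⁿ / (n! Γ(n+ν+1))`, a series that
converges uniformly on `[-1, 1]` (as `Γ ≥ 1/6` on `(0, ∞)`) and so is continuous at `0` with value
`1/Γ(ν+1)`. For `0 < ν < 1` the `I_{-ν}` term therefore dominates `K_ν`, and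
`(x/2)^ν K_ν x → π / (2 sin(νπ) Γ(1-ν))`. As `K_{α-1} = K_{1-α}` and `sin((1-α)π) = sin(απ)`, the
quotient of these asymptotics for `ν = 1-α` and `ν = α` is
`K_{α-1} y / K_α y ~ Γ(1-α)/Γ(α) · (y/2)^(2α-1)`; substituting `y = √(2m) x` gives the claim. -/

open Real Filter Set

/-- Modified Bessel function of the first kind `I_ν`. -/
noncomputable def besselI (ν x : ℝ) : ℝ :=
  ∑' n : ℕ, (x / 2) ^ (2 * (n : ℝ) + ν) / ((n.factorial : ℝ) * Real.Gamma ((n : ℝ) + ν + 1))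

/-- Modified Bessel function of the second kind `K_ν`, for non-integer `ν`. -/
noncomputable def besselK (ν x : ℝ) : ℝ :=
  (Real.pi / 2) * (besselI (-ν) x - besselI ν x) / Real.sin (ν * Real.pi)

open Topology

lemma Real.inv_six_le_Gamma {s : ℝ} (hs : 0 < s) : 6⁻¹ ≤ Gamma s := by
  have one_le_Gamma : ∀ {r : ℝ}, 2 ≤ r → 1 ≤ Gamma r := fun hr =>
    Gamma_two ▸ Gamma_strictMonoOn_Ici.monotoneOn (mem_Ici.2 le_rfl) (mem_Ici.2 hr) hr
  rcases le_or_gt 2 s with hs2 | hs2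
  · linarith [one_le_Gamma hs2]
  · have hrec : Gamma (s + 2) = (s + 1) * (s * Gamma s) := by
      rw [show s + 2 = s + 1 + 1 by ring, Gamma_add_one (by linarith), Gamma_add_one hs.ne']
    have h1 := one_le_Gamma (show 2 ≤ s + 2 by linarith)
    have h6 : (s + 1) * s ≤ 6 := by nlinarith
    nlinarith [Gamma_pos_of_pos hs]

noncomputable def besselISeries (ν t : ℝ) : ℝ :=
  ∑' n : ℕ, t ^ n / ((n.factorial : ℝ) * Gamma ((n : ℝ) + ν + 1))

lemma abs_besselISeries_term_le {ν t : ℝ} (hν : -1 < ν) (ht : |t| ≤ 1) (n : ℕ) :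
    |t ^ n / ((n.factorial : ℝ) * Gamma ((n : ℝ) + ν + 1))| ≤ 6 * (1 ^ n / n.factorial) := by
  have hpos : 0 < (n : ℝ) + ν + 1 := by linarith [(n.cast_nonneg : (0 : ℝ) ≤ n)]
  have hΓ : 6⁻¹ ≤ Gamma ((n : ℝ) + ν + 1) := inv_six_le_Gamma hpos
  rw [abs_div, abs_pow, abs_of_pos (mul_pos (by positivity) (Gamma_pos_of_pos hpos))]
  calc |t| ^ n / ((n.factorial : ℝ) * Gamma ((n : ℝ) + ν + 1))
      ≤ 1 / ((n.factorial : ℝ) * 6⁻¹) := by gcongr; exact pow_le_one₀ (abs_nonneg t) ht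
    _ = 6 * (1 ^ n / n.factorial) := by field_simp; ring

lemma continuousAt_besselISeries_zero {ν : ℝ} (hν : -1 < ν) : ContinuousAt (besselISeries ν) 0 := by
  have hcont : ContinuousOn (besselISeries ν) (Icc (-1) 1) := by
    refine continuousOn_tsum (fun n => by fun_prop) ((summable_pow_div_factorial 1).mul_left 6)
      fun n t ht => abs_besselISeries_term_le hν (abs_le.2 ht) n
  exact hcont.continuousAt (Icc_mem_nhds (by norm_num) (by norm_num))

lemma besselISeries_zero (ν : ℝ) : besselISeries ν 0 = (Gamma (ν + 1))⁻¹ := by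
  rw [besselISeries, tsum_eq_single 0 fun n hn => by simp [zero_pow hn]]
  simp

lemma besselI_eq_rpow_mul_besselISeries (ν : ℝ) {x : ℝ} (hx : 0 < x) :
    besselI ν x = (x / 2) ^ ν * besselISeries ν ((x / 2) ^ 2) := by
  rw [besselI, besselISeries, ← tsum_mul_left]
  congr 1 with n
  rw [rpow_add (by positivity), rpow_mul_natCast (by positivity), rpow_ofNat]
  ring

lemma besselK_neg (ν x : ℝ) : besselK (-ν) x = besselK ν x := by
  simp only [besselK, neg_neg, neg_mul, sin_neg]
  ring

lemma rpow_mul_besselK_eq (ν : ℝ) {x : ℝ} (hx : 0 < x) :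
    (x / 2) ^ ν * besselK ν x = π / (2 * sin (ν * π)) *
      (besselISeries (-ν) ((x / 2) ^ 2) -
        (x / 2) ^ ν * (x / 2) ^ ν * besselISeries ν ((x / 2) ^ 2)) := by
  have hp : (x / 2) ^ ν ≠ 0 := (rpow_pos_of_pos (by positivity) ν).ne'
  rw [besselK, besselI_eq_rpow_mul_besselISeries _ hx, besselI_eq_rpow_mul_besselISeries _ hx,
    rpow_neg (by positivity)]
  field_simp

lemma tendsto_rpow_mul_besselK {ν : ℝ} (hν : 0 < ν) (hν1 : ν < 1) :
    Tendsto (fun x => (x / 2) ^ ν * besselK ν x) (𝓝[>] 0)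
      (𝓝 (π / (2 * sin (ν * π)) * (Gamma (1 - ν))⁻¹)) := by
  have hhalf : Tendsto (fun x : ℝ => x / 2) (𝓝[>] 0) (𝓝 0) :=
    ((continuous_id.div_const 2).tendsto' 0 0 (zero_div 2)).mono_left nhdsWithin_le_nhds
  have hrpow : Tendsto (fun x : ℝ => (x / 2) ^ ν) (𝓝[>] 0) (𝓝 0) := by
    have := (continuousAt_rpow_const 0 ν (Or.inr hν.le)).tendsto.comp hhalf
    rwa [zero_rpow hν.ne'] at this
  have hseries : ∀ μ, -1 < μ →
      Tendsto (fun x => besselISeries μ ((x / 2) ^ 2)) (𝓝[>] 0) (𝓝 (Gamma (μ + 1))⁻¹) := by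
    intro μ hμ
    rw [← besselISeries_zero]
    exact (continuousAt_besselISeries_zero hμ).tendsto.comp (by simpa using hhalf.pow 2)
  have hlim := ((hseries (-ν) (by linarith)).sub
    ((hrpow.mul hrpow).mul (hseries ν (by linarith)))).const_mul (π / (2 * sin (ν * π)))
  rw [zero_mul, zero_mul, sub_zero, neg_add_eq_sub] at hlim
  refine hlim.congr' ?_
  filter_upwards [self_mem_nhdsWithin] with x hx using (rpow_mul_besselK_eq ν hx).symm

lemma tendsto_besselK_sub_one_div_besselK {α : ℝ} (hα : 0 < α) (hα1 : α < 1) :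
    Tendsto (fun y => besselK (α - 1) y / besselK α y / (y / 2) ^ (2 * α - 1)) (𝓝[>] 0)
      (𝓝 (Gamma (1 - α) / Gamma α)) := by
  have hsin : 0 < sin (α * π) := sin_pos_of_pos_of_lt_pi (by positivity) (by nlinarith [pi_pos])
  have hlim := (tendsto_rpow_mul_besselK (ν := 1 - α) (by linarith) (by linarith)).div
    (tendsto_rpow_mul_besselK hα hα1)
    (mul_ne_zero (by positivity) (inv_ne_zero (Gamma_pos_of_pos (by linarith)).ne'))
  rw [sub_sub_cancel, show (1 - α) * π = π - α * π by ring, sin_pi_sub] at hlim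
  convert hlim.congr' ?_ using 2
  · have := (Gamma_pos_of_pos hα).ne'
    field_simp
  · filter_upwards [self_mem_nhdsWithin] with y (hy : 0 < y)
    have hr : (y / 2) ^ (1 - α) ≠ 0 := (rpow_pos_of_pos (by positivity) _).ne'
    have hsplit : (y / 2) ^ α = (y / 2) ^ (1 - α) * (y / 2) ^ (2 * α - 1) := by
      rw [← rpow_add (by positivity)]; ring_nf
    rw [Pi.div_apply, show α - 1 = -(1 - α) by ring, besselK_neg, hsplit, mul_assoc,
      mul_div_mul_left _ _ hr, div_div, mul_comm]

lemma rpow_sqrt_two_mul_mul_div_two (α : ℝ) {m x : ℝ} (hm : 0 < m) (hx : 0 ≤ x) :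
    (√(2 * m) * x / 2) ^ (2 * α - 1) = m ^ α / (√(2 * m) * 2 ^ (α - 1)) * x ^ (2 * α - 1) := by
  set u := √(2 * m) / 2 with hu_def
  have hu : 0 < u := by positivity
  have hsqrt : √(2 * m) = 2 * u := by rw [hu_def]; ring
  have hm' : m = 2 * u ^ 2 := by
    rw [hu_def, div_pow, sq_sqrt (by positivity)]; ring
  have hu2 : (u ^ 2) ^ α = u ^ (2 * α - 1) * u := by
    rw [← rpow_natCast, ← rpow_mul hu.le, rpow_sub_one hu.ne']; field_simp; ring_nf
  have h2 : (2 : ℝ) ^ α = 2 ^ (α - 1) * 2 := by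
    rw [rpow_sub_one two_ne_zero]; field_simp
  rw [hsqrt, show 2 * u * x / 2 = u * x by ring, mul_rpow hu.le hx, hm',
    mul_rpow zero_le_two (by positivity), hu2, h2]
  field_simp

theorem drift_asymptotics_at_zero (α m : ℝ) (hα : 0 < α) (hα1 : α < 1) (hm : 0 < m) :
    Filter.Tendsto
      (fun x : ℝ =>
        (-Real.sqrt (2 * m) * besselK (α - 1) (Real.sqrt (2 * m) * x) /
            besselK α (Real.sqrt (2 * m) * x)) /
          (-(m ^ α * Real.Gamma (1 - α) / (2 ^ (α - 1) * Real.Gamma α)) *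
            x ^ (2 * α - 1)))
      (nhdsWithin 0 (Set.Ioi 0)) (nhds 1) := by
  have hc : 0 < √(2 * m) := sqrt_pos.2 (by positivity)
  have hscale : Tendsto (fun x => √(2 * m) * x) (𝓝[>] 0) (𝓝[>] 0) :=
    tendsto_comap.mono_left (comap_mulLeft_nhdsGT_zero hc).ge
  have hΓα := (Gamma_pos_of_pos hα).ne'
  have hΓ1α := (Gamma_pos_of_pos (sub_pos.2 hα1)).ne'
  have hlim := ((tendsto_besselK_sub_one_div_besselK hα hα1).comp hscale).div_const
    (Gamma (1 - α) / Gamma α)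
  rw [div_self (div_ne_zero hΓ1α hΓα)] at hlim
  refine hlim.congr' ?_
  filter_upwards [self_mem_nhdsWithin] with x (hx : 0 < x)
  have hx' := (rpow_pos_of_pos hx (2 * α - 1)).ne'
  have hmα := (rpow_pos_of_pos hm α).ne'
  have h2 := (rpow_pos_of_pos two_pos (α - 1)).ne'
  rw [Function.comp_apply, rpow_sqrt_two_mul_mul_div_two α hm hx.le]
  field_simp
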